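/- arXiv:2310.02499 — 3 statements merged into one kernel-verified Lean document; each statement's English description precedes it below -/
import Mathlib

section
/- For every positive integer n, the number of rooted labeled forests on the vertex set {1,...,n} (unordered forests where each vertex gets a distinct label and each component has a distinguished root) equals (n+1)^(n-1), and the number of rooted labeled trees on {1,...,n} equals n^(n-1). -/
/-!
Prüfer's bijection, extended to rooted forests. Repeatedly deleting the largest leaf and recording
its parent (`none` for a root) encodes a rooted forest on a vertex set `V` by a word of length
`|V| - 1` over `V ∪ {none}`. The vertices occurring in the code are exactly the non-leaves, so the
first deleted leaf is the largest vertex missing from the code and the encoding can be inverted: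
there are `(|V| + 1) ^ (|V| - 1)` forests on `V`. Deleting the root `r` of a tree turns its
children into roots of a forest on the remaining `n - 1` vertices, and this is reversible, so
there are `n ^ (n - 2)` trees rooted at each `r` and `n ^ (n - 1)` rooted trees in all.
-/

open Filter

/-- A rooted labeled forest on `Fin n`, encoded by its parent function together
with an acyclicity witness (a depth-like function decreasing along parents). -/
def IsForest (n : ℕ) (p : Fin n → Option (Fin n)) : Prop :=
  ∃ d : Fin n → ℕ, ∀ v w : Fin n, p v = some w → d w < d v

/-- The type of rooted labeled forests on `[n]`. -/
def Forest (n : ℕ) : Type := {p : Fin n → Option (Fin n) // IsForest n p}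

/-- `F.Ancestor a b` means `a` is a strict ancestor of `b` in the forest `F`. -/
def Forest.Ancestor {n : ℕ} (F : Forest n) (a b : Fin n) : Prop :=
  Relation.TransGen (fun x y : Fin n => F.val x = some y) b a

/-- A forest is a tree when it has exactly one root. -/
def Forest.IsTree {n : ℕ} (F : Forest n) : Prop :=
  ∃! v : Fin n, F.val v = none

/-- A pattern: a permutation of `Fin k` for some `k`. -/
abbrev Pattern : Type := Σ k : ℕ, Equiv.Perm (Fin k)

/-- `F` contains an instance of the pattern `π`: a chain of vertices, each an
ancestor of the next, whose labels are in the same relative order as `π`. -/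
def Forest.Contains {n : ℕ} (F : Forest n) (π : Pattern) : Prop :=
  ∃ v : Fin π.1 → Fin n,
    (∀ i j : Fin π.1, i < j → F.Ancestor (v i) (v j)) ∧
    (∀ i j : Fin π.1, π.2 i < π.2 j ↔ v i < v j)

/-- `F` avoids every pattern in `S`. -/
def Forest.AvoidsSet {n : ℕ} (F : Forest n) (S : Set Pattern) : Prop :=
  ∀ π ∈ S, ¬ F.Contains π

/-- The number of rooted labeled forests on `[n]` avoiding `S`. -/
noncomputable def forestCount (S : Set Pattern) (n : ℕ) : ℕ :=
  Nat.card {F : Forest n // F.AvoidsSet S}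

/-- The number of rooted labeled trees on `[n]` avoiding `S`. -/
noncomputable def treeCount (S : Set Pattern) (n : ℕ) : ℕ :=
  Nat.card {F : Forest n // F.IsTree ∧ F.AvoidsSet S}

open Finset Function

theorem card_lists_length_eq {β : Type*} (S : Finset β) (k : ℕ) :
    Nat.card {l : List β // l.length = k ∧ ∀ a ∈ l, a ∈ S} = S.card ^ k := by
  let e : (Fin k → S) ≃ {l : List β // l.length = k ∧ ∀ a ∈ l, a ∈ S} :=
    { toFun f := ⟨List.ofFn fun i => (f i : β), List.length_ofFn, by simp [List.mem_ofFn]⟩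
      invFun l i := ⟨l.1[i.cast l.2.1.symm], l.2.2 _ (List.getElem_mem _)⟩
      left_inv f := by ext; simp
      right_inv l := Subtype.ext <| List.ext_getElem (by simp [l.2.1]) fun _ _ _ => by simp }
  rw [← Nat.card_congr e, Nat.card_fun, Nat.card_eq_finsetCard, Nat.card_eq_fintype_card,
    Fintype.card_fin]

theorem card_subtype_existsUnique {ι β : Type*} [Fintype ι] [Finite β] (Q : ι → β → Prop) :
    Nat.card {x // ∃! i, Q i x} = ∑ i, Nat.card {x // ∀ j, Q j x ↔ j = i} := by
  rw [← Nat.card_sigma]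
  refine Nat.card_congr
    { toFun x := ⟨x.2.exists.choose, x.1, fun j =>
        ⟨fun hj => x.2.unique hj x.2.exists.choose_spec, fun h => h ▸ x.2.exists.choose_spec⟩⟩
      invFun x := ⟨x.2.1, x.1, (x.2.2 x.1).2 rfl, fun j hj => (x.2.2 j).1 hj⟩
      left_inv x := rfl
      right_inv x := by
        have hx : ∃! i, Q i x.2.1 := ⟨x.1, (x.2.2 x.1).2 rfl, fun j hj => (x.2.2 j).1 hj⟩
        exact Sigma.subtype_ext ((x.2.2 _).1 hx.exists.choose_spec) rfl }

theorem image_update_eq_insert {α β : Type*} [DecidableEq α] [DecidableEq β] {V : Finset α}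
    {ℓ : α} (hℓ : ℓ ∈ V) (p : α → β) (s : β) :
    V.image (update p ℓ s) = insert s ((V.erase ℓ).image p) := by
  conv_lhs => rw [← insert_erase hℓ]
  rw [image_insert, update_self]
  congr 1
  exact image_congr fun v hv => update_of_ne (ne_of_mem_erase hv) _ _

section Forests

variable {α : Type*} {V : Finset α} {p q : α → Option α}

/-- `p` is a rooted forest with vertex set `V`: `p v` is the parent of `v`, or `none` when `v` is
a root or lies outside `V`. -/
structure IsForestOn (V : Finset α) (p : α → Option α) : Prop where
  eq_none_of_notMem : ∀ v ∉ V, p v = none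
  mem_of_eq_some : ∀ v w, p v = some w → w ∈ V
  exists_rank : ∃ d : α → ℕ, ∀ v w, p v = some w → d w < d v

theorem isForestOn_none (V : Finset α) : IsForestOn V fun _ => none :=
  ⟨fun _ _ => rfl, fun _ _ h => (nomatch h), ⟨fun _ => 0, fun _ _ h => (nomatch h)⟩⟩

theorem IsForestOn.eq_none_of_card_eq_one (hp : IsForestOn V p) (hV : V.card = 1) :
    p = fun _ => none := by
  obtain ⟨v, rfl⟩ := card_eq_one.1 hV
  obtain ⟨d, hd⟩ := hp.exists_rank
  funext w
  by_contra hw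
  obtain ⟨x, hx⟩ := Option.ne_none_iff_exists'.1 hw
  have hwv : w = v := by_contra fun h => hw (hp.eq_none_of_notMem w (by simpa using h))
  have hxv : x = v := by simpa using hp.mem_of_eq_some w x hx
  rw [hwv, hxv] at hx
  exact (hd v v hx).false

variable [DecidableEq α] {ℓ : α} {s : Option α}

def forestLeaves (V : Finset α) (p : α → Option α) : Finset α :=
  V.filter fun v => some v ∉ V.image p

theorem IsForestOn.forestLeaves_nonempty (hp : IsForestOn V p) (hV : V.Nonempty) :
    (forestLeaves V p).Nonempty := by
  obtain ⟨d, hd⟩ := hp.exists_rank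
  obtain ⟨v, hv, hmax⟩ := V.exists_max_image d hV
  refine ⟨v, mem_filter.2 ⟨hv, fun hmem => ?_⟩⟩
  obtain ⟨w, hw, hwv⟩ := mem_image.1 hmem
  exact (hd w v hwv).not_ge (hmax w hw)

theorem IsForestOn.erase_leaf (hp : IsForestOn V p) (hℓ : ℓ ∈ forestLeaves V p) :
    IsForestOn (V.erase ℓ) (update p ℓ none) where
  eq_none_of_notMem v hv := by
    rcases eq_or_ne v ℓ with rfl | hne
    · exact update_self ..
    · rw [update_of_ne hne]
      exact hp.eq_none_of_notMem v fun h => hv (mem_erase.2 ⟨hne, h⟩)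
  mem_of_eq_some v w h := by
    have hne : v ≠ ℓ := by rintro rfl; simp at h
    rw [update_of_ne hne] at h
    have hv : v ∈ V := by_contra fun hv => by simp [hp.eq_none_of_notMem v hv] at h
    refine mem_erase.2 ⟨?_, hp.mem_of_eq_some v w h⟩
    rintro rfl
    exact (mem_filter.1 hℓ).2 (mem_image.2 ⟨v, hv, h⟩)
  exists_rank := by
    obtain ⟨d, hd⟩ := hp.exists_rank
    refine ⟨d, fun v w h => hd v w ?_⟩
    rcases eq_or_ne v ℓ with rfl | hne
    · simp at h
    · rwa [update_of_ne hne] at h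

theorem IsForestOn.update_of_erase (hq : IsForestOn (V.erase ℓ) q) (hℓ : ℓ ∈ V)
    (hs : ∀ x ∈ s, x ∈ V.erase ℓ) : IsForestOn V (update q ℓ s) where
  eq_none_of_notMem v hv := by
    have hne : v ≠ ℓ := by rintro rfl; exact hv hℓ
    rw [update_of_ne hne]
    exact hq.eq_none_of_notMem v fun h => hv (mem_of_mem_erase h)
  mem_of_eq_some v w h := by
    rcases eq_or_ne v ℓ with rfl | hne
    · rw [update_self] at h
      exact mem_of_mem_erase (hs w h)
    · rw [update_of_ne hne] at h
      exact mem_of_mem_erase (hq.mem_of_eq_some v w h)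
  exists_rank := by
    obtain ⟨d, hd⟩ := hq.exists_rank
    refine ⟨fun x => if x = ℓ then V.sup d + 1 else d x, fun v w h => ?_⟩
    rcases eq_or_ne v ℓ with rfl | hne
    · rw [update_self] at h
      have hw := mem_erase.1 (hs w h)
      simpa [hw.1] using Nat.lt_succ_of_le (le_sup (f := d) hw.2)
    · rw [update_of_ne hne] at h
      have hw := ne_of_mem_erase (hq.mem_of_eq_some v w h)
      simpa [hw, hne] using hd v w h

end Forests

section Pruefer

variable {α : Type*} [LinearOrder α] {V : Finset α} {p : α → Option α}

/-- `k` is the number of vertices minus one: the last vertex left is a root and is not recorded. -/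
def prueferCode : ℕ → (α → Option α) → Finset α → List (Option α)
  | 0, _, _ => []
  | k + 1, p, V =>
    match (forestLeaves V p).max with
    | ⊥ => []
    | some ℓ => p ℓ :: prueferCode k (update p ℓ none) (V.erase ℓ)

/-- The leaf deleted first is the largest vertex that does not occur in the code. -/
def prueferDecode : List (Option α) → Finset α → α → Option α
  | [], _ => fun _ => none
  | s :: rest, V =>
    match (V.filter fun v => some v ∉ s :: rest).max with
    | ⊥ => fun _ => none
    | some ℓ => update (prueferDecode rest (V.erase ℓ)) ℓ s

theorem IsForestOn.prueferCode_succ {k : ℕ} (hp : IsForestOn V p) (hV : V.card = k + 2) :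
    ∃ ℓ : α, (forestLeaves V p).max = ℓ ∧ ℓ ∈ forestLeaves V p ∧ (V.erase ℓ).card = k + 1 ∧
      prueferCode (k + 1) p V = p ℓ :: prueferCode k (update p ℓ none) (V.erase ℓ) := by
  obtain ⟨ℓ, hmax⟩ := max_of_nonempty (hp.forestLeaves_nonempty (card_pos.1 (by omega)))
  have hℓ := mem_of_max hmax
  refine ⟨ℓ, hmax, hℓ, ?_, by rw [prueferCode, hmax]⟩
  rw [card_erase_of_mem (mem_filter.1 hℓ).1]
  omega

theorem IsForestOn.length_prueferCode :
    ∀ {k : ℕ} {V : Finset α} {p : α → Option α}, IsForestOn V p → V.card = k + 1 →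
      (prueferCode k p V).length = k
  | 0, _, _, _, _ => rfl
  | k + 1, V, p, hp, hV => by
    obtain ⟨ℓ, -, hℓ, hV', hcode⟩ := hp.prueferCode_succ hV
    rw [hcode, List.length_cons, (hp.erase_leaf hℓ).length_prueferCode hV']

theorem IsForestOn.mem_prueferCode :
    ∀ {k : ℕ} {V : Finset α} {p : α → Option α}, IsForestOn V p → V.card = k + 1 →
      ∀ x, some x ∈ prueferCode k p V ↔ some x ∈ V.image p
  | 0, V, p, hp, hV, x => by simp [prueferCode, hp.eq_none_of_card_eq_one hV]
  | k + 1, V, p, hp, hV, x => by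
    obtain ⟨ℓ, -, hℓ, hV', hcode⟩ := hp.prueferCode_succ hV
    have himage : V.image p = insert (p ℓ) ((V.erase ℓ).image (update p ℓ none)) := by
      simpa using image_update_eq_insert (mem_filter.1 hℓ).1 (update p ℓ none) (p ℓ)
    rw [hcode, himage, mem_insert, List.mem_cons, eq_comm,
      (hp.erase_leaf hℓ).mem_prueferCode hV']

theorem IsForestOn.prueferDecode_prueferCode :
    ∀ {k : ℕ} {V : Finset α} {p : α → Option α}, IsForestOn V p → V.card = k + 1 →
      prueferDecode (prueferCode k p V) V = p
  | 0, V, p, hp, hV => by simp [prueferCode, prueferDecode, hp.eq_none_of_card_eq_one hV]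
  | k + 1, V, p, hp, hV => by
    obtain ⟨ℓ, hmax, hℓ, hV', hcode⟩ := hp.prueferCode_succ hV
    have hleaves : (V.filter fun v => some v ∉ prueferCode (k + 1) p V) = forestLeaves V p :=
      filter_congr fun v _ => by rw [hp.mem_prueferCode hV]
    rw [← hleaves, hcode] at hmax
    rw [hcode, prueferDecode, hmax]
    dsimp only
    rw [(hp.erase_leaf hℓ).prueferDecode_prueferCode hV', update_idem, update_eq_self]

theorem filter_some_notMem_nonempty {l : List (Option α)} (hV : V.card = l.length + 1) :
    (V.filter fun v => some v ∉ l).Nonempty := by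
  have hle : (V.filter fun v => some v ∈ l).card ≤ l.length :=
    calc _ ≤ l.toFinset.card :=
          card_le_card_of_injOn some (fun v hv => by simpa using (mem_filter.1 hv).2)
            (Option.some_injective _).injOn
      _ ≤ l.length := List.toFinset_card_le l
  have hsplit := card_filter_add_card_filter_not (s := V) (fun v => some v ∈ l)
  rw [← card_pos]
  omega

theorem prueferDecode_cons {s : Option α} {rest : List (Option α)}
    (hV : V.card = rest.length + 2) (hl : ∀ x, some x ∈ s :: rest → x ∈ V) :
    ∃ ℓ : α, (V.filter fun v => some v ∉ s :: rest).max = ℓ ∧ ℓ ∈ V ∧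
      (∀ x ∈ s, x ∈ V.erase ℓ) ∧ (V.erase ℓ).card = rest.length + 1 ∧
      (∀ x, some x ∈ rest → x ∈ V.erase ℓ) ∧
      prueferDecode (s :: rest) V = update (prueferDecode rest (V.erase ℓ)) ℓ s := by
  obtain ⟨ℓ, hmax⟩ :=
    max_of_nonempty (filter_some_notMem_nonempty (l := s :: rest) (by simpa using hV))
  obtain ⟨hℓV, hℓ⟩ := mem_filter.1 (mem_of_max hmax)
  have hl' : ∀ x, some x ∈ s :: rest → x ∈ V.erase ℓ := fun x hx =>
    mem_erase.2 ⟨by rintro rfl; exact hℓ hx, hl x hx⟩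
  refine ⟨ℓ, hmax, hℓV, fun x hx => hl' x (by simp [Option.mem_def.1 hx]),
    by rw [card_erase_of_mem hℓV]; omega, fun x hx => hl' x (List.mem_cons_of_mem _ hx), ?_⟩
  rw [prueferDecode, hmax]

theorem isForestOn_prueferDecode : ∀ {l : List (Option α)} {V : Finset α},
    V.card = l.length + 1 → (∀ x, some x ∈ l → x ∈ V) → IsForestOn V (prueferDecode l V)
  | [], V, _, _ => isForestOn_none V
  | s :: rest, V, hV, hl => by
    obtain ⟨ℓ, -, hℓV, hs, hV', hrest, hdec⟩ := prueferDecode_cons (by simpa using hV) hl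
    rw [hdec]
    exact (isForestOn_prueferDecode hV' hrest).update_of_erase hℓV hs

theorem mem_image_prueferDecode : ∀ {l : List (Option α)} {V : Finset α},
    V.card = l.length + 1 → (∀ x, some x ∈ l → x ∈ V) →
      ∀ x, some x ∈ V.image (prueferDecode l V) ↔ some x ∈ l
  | [], V, _, _, x => by simp [prueferDecode]
  | s :: rest, V, hV, hl, x => by
    obtain ⟨ℓ, -, hℓV, -, hV', hrest, hdec⟩ := prueferDecode_cons (by simpa using hV) hl
    rw [hdec, image_update_eq_insert hℓV, mem_insert, mem_image_prueferDecode hV' hrest,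
      List.mem_cons, eq_comm]

theorem prueferCode_prueferDecode : ∀ {l : List (Option α)} {V : Finset α},
    V.card = l.length + 1 → (∀ x, some x ∈ l → x ∈ V) →
      prueferCode l.length (prueferDecode l V) V = l
  | [], _, _, _ => rfl
  | s :: rest, V, hV, hl => by
    obtain ⟨ℓ, hmax, -, -, hV', hrest, hdec⟩ := prueferDecode_cons (by simpa using hV) hl
    have hp := isForestOn_prueferDecode hV hl
    have hleaves : forestLeaves V (prueferDecode (s :: rest) V) =
        V.filter fun v => some v ∉ s :: rest :=
      filter_congr fun v _ => by rw [mem_image_prueferDecode hV hl]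
    obtain ⟨ℓ', hmax', -, -, hcode⟩ := hp.prueferCode_succ (k := rest.length) (by simpa using hV)
    rw [hleaves, hmax, WithBot.coe_inj] at hmax'
    subst hmax'
    have hqℓ : prueferDecode rest (V.erase ℓ) ℓ = none :=
      (isForestOn_prueferDecode hV' hrest).eq_none_of_notMem ℓ (notMem_erase ℓ V)
    rw [List.length_cons, hcode, hdec, update_self, update_idem,
      update_eq_self_iff.2 hqℓ.symm, prueferCode_prueferDecode hV' hrest]

def prueferEquiv {k : ℕ} (hV : V.card = k + 1) :
    {p // IsForestOn V p} ≃ {l : List (Option α) // l.length = k ∧ ∀ a ∈ l, a ∈ V.insertNone}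
    where
  toFun p := ⟨prueferCode k p V, p.2.length_prueferCode hV, fun a ha =>
    mem_insertNone.2 fun x hx => by
      rw [Option.mem_def.1 hx, p.2.mem_prueferCode hV] at ha
      obtain ⟨w, -, hw⟩ := mem_image.1 ha
      exact p.2.mem_of_eq_some w x hw⟩
  invFun l := ⟨prueferDecode l.1 V, isForestOn_prueferDecode (by rw [hV, l.2.1])
    fun x hx => some_mem_insertNone.1 (l.2.2 _ hx)⟩
  left_inv p := Subtype.ext (p.2.prueferDecode_prueferCode hV)
  right_inv l := Subtype.ext <| by
    simpa [l.2.1] using prueferCode_prueferDecode (by rw [hV, l.2.1])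
      fun x hx => some_mem_insertNone.1 (l.2.2 _ hx)

end Pruefer

theorem card_isForestOn {α : Type*} [LinearOrder α] (V : Finset α) :
    Nat.card {p // IsForestOn V p} = (V.card + 1) ^ (V.card - 1) := by
  rcases V.eq_empty_or_nonempty with rfl | hV
  · rw [card_empty, zero_add, one_pow, Nat.card_eq_one_iff_exists]
    exact ⟨⟨_, isForestOn_none ∅⟩, fun p =>
      Subtype.ext (funext fun v => p.2.eq_none_of_notMem v (notMem_empty v))⟩
  · obtain ⟨k, hk⟩ := Nat.exists_eq_add_one_of_ne_zero (card_pos.2 hV).ne'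
    rw [Nat.card_congr (prueferEquiv hk), card_lists_length_eq, card_insertNone, hk,
      Nat.add_sub_cancel]

section Trees

variable {α : Type*} [DecidableEq α] [Fintype α] {p q : α → Option α} {r : α}

def deleteRoot (r : α) (p : α → Option α) (v : α) : Option α :=
  if p v = some r then none else p v

def attachRoot (r : α) (q : α → Option α) (v : α) : Option α :=
  if v = r then none else some ((q v).getD r)

theorem IsForestOn.deleteRoot (hp : IsForestOn univ p) (hr : p r = none) :
    IsForestOn (univ.erase r) (deleteRoot r p) where
  eq_none_of_notMem v hv := by
    obtain rfl : v = r := by simpa using hv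
    simp [_root_.deleteRoot, hr]
  mem_of_eq_some v w h := by
    unfold _root_.deleteRoot at h
    split_ifs at h with hvr
    exact mem_erase.2 ⟨by rintro rfl; exact hvr h, mem_univ w⟩
  exists_rank := by
    obtain ⟨d, hd⟩ := hp.exists_rank
    refine ⟨d, fun v w h => hd v w ?_⟩
    unfold _root_.deleteRoot at h
    split_ifs at h
    exact h

theorem IsForestOn.attachRoot (hq : IsForestOn (univ.erase r) q) :
    IsForestOn univ (attachRoot r q) where
  eq_none_of_notMem v hv := absurd (mem_univ v) hv
  mem_of_eq_some _ w _ := mem_univ w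
  exists_rank := by
    obtain ⟨d, hd⟩ := hq.exists_rank
    refine ⟨fun x => if x = r then 0 else d x + 1, fun v w h => ?_⟩
    unfold _root_.attachRoot at h
    split_ifs at h with hvr
    rcases hqv : q v with _ | u
    · simp_all
    · have hur : u ≠ r := ne_of_mem_erase (hq.mem_of_eq_some v u hqv)
      simp_all

def deleteRootEquiv (r : α) :
    {p : {p // IsForestOn univ p} // ∀ v, p.1 v = none ↔ v = r} ≃
      {q // IsForestOn (univ.erase r) q} where
  toFun p := ⟨deleteRoot r p.1.1, p.1.2.deleteRoot ((p.2 r).2 rfl)⟩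
  invFun q := ⟨⟨attachRoot r q.1, q.2.attachRoot⟩, fun v => by simp [attachRoot]⟩
  left_inv p := by
    refine Subtype.ext (Subtype.ext (funext fun v => ?_))
    by_cases hvr : v = r
    · simp [attachRoot, hvr, (p.2 r).2 rfl]
    · obtain ⟨u, hu⟩ := Option.ne_none_iff_exists'.1 (mt (p.2 v).1 hvr)
      by_cases hur : u = r <;> simp [attachRoot, deleteRoot, hvr, hu, hur]
  right_inv q := by
    refine Subtype.ext (funext fun v => ?_)
    by_cases hvr : v = r
    · simp [attachRoot, deleteRoot, hvr, q.2.eq_none_of_notMem r (notMem_erase r univ)]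
    · rcases hqv : q.1 v with _ | u
      · simp [attachRoot, deleteRoot, hvr, hqv]
      · have hur : u ≠ r := ne_of_mem_erase (q.2.mem_of_eq_some v u hqv)
        simp [attachRoot, deleteRoot, hvr, hqv, hur]

end Trees

theorem card_isTree {α : Type*} [LinearOrder α] [Fintype α] [Nonempty α] :
    Nat.card {p : {p : α → Option α // IsForestOn univ p} // ∃! r, p.1 r = none} =
      Fintype.card α ^ (Fintype.card α - 1) := by
  have hn : 0 < Fintype.card α := Fintype.card_pos
  have hroot (r : α) : Nat.card {p : {p : α → Option α // IsForestOn univ p} //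
      ∀ v, p.1 v = none ↔ v = r} = Fintype.card α ^ (Fintype.card α - 2) := by
    rw [Nat.card_congr (deleteRootEquiv r), card_isForestOn, card_erase_of_mem (mem_univ r),
      card_univ, Nat.sub_add_cancel hn, Nat.sub_sub]
  rw [card_subtype_existsUnique, sum_congr rfl fun r _ => hroot r, sum_const, card_univ,
    smul_eq_mul]
  obtain h1 | h2 := eq_or_ne (Fintype.card α) 1
  · simp [h1]
  · rw [show Fintype.card α - 2 = Fintype.card α - 1 - 1 by omega, mul_pow_sub_one (by omega)]

def forestEquivIsForestOn (n : ℕ) : Forest n ≃ {p : Fin n → Option (Fin n) // IsForestOn univ p} :=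
  Equiv.subtypeEquivRight fun _ =>
    ⟨fun h => ⟨fun v hv => absurd (mem_univ v) hv, fun _ w _ => mem_univ w, h⟩,
      IsForestOn.exists_rank⟩

/-- Cayley's formula: there are `(n+1)^(n-1)` rooted labeled forests on `[n]`
and `n^(n-1)` rooted labeled trees on `[n]`, for every positive `n`. -/
theorem cayley_forest_tree_count (n : ℕ) (hn : 0 < n) :
    Nat.card (Forest n) = (n + 1) ^ (n - 1) ∧
    Nat.card {F : Forest n // F.IsTree} = n ^ (n - 1) := by
  have : Nonempty (Fin n) := ⟨⟨0, hn⟩⟩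
  refine ⟨?_, ?_⟩
  · rw [Nat.card_congr (forestEquivIsForestOn n), card_isForestOn, card_univ, Fintype.card_fin]
  · have e : {F : Forest n // F.IsTree} ≃ {p : {p // IsForestOn univ p} // ∃! r, p.1 r = none} :=
      (forestEquivIsForestOn n).subtypeEquiv fun _ => Iff.rfl
    rw [Nat.card_congr e, card_isTree, Fintype.card_fin]
end

section
/- If S contains the pattern 1,2,...,k and the pattern ℓ,ℓ−1,...,1 for some k,ℓ, then lim_{n→∞} f_n(S)^{1/n}/n = 0, where f_n(S) is the number of rooted labeled forests on [n] avoiding S. -/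
open Filter

/-!
The labels along the path from a root to any vertex of an `S`-avoiding forest are distinct and
contain no increasing subsequence of length `k` and no decreasing one of length `l`, so by
Erdős–Szekeres every vertex has fewer than `m = (k - 1)(l - 1) + 1` strict ancestors.

A forest of depth `< m` is determined by the level of each vertex and, for each vertex of level
`j + 1`, a parent among the vertices of level `j`. Giving level `j` the weight `R j`, where
`R m = 0` and `R j = exp (R (j + 1)) / ε`, the bound `x ^ a ≤ a! * exp x` applied level by level
telescopes to at most `C_ε * ε ^ n * n!` such forests, for every `ε > 0`. This is the
coefficient bound for an entire exponential generating function, and it forces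
`f_n ^ (1 / n) / n → 0`.
-/

open Finset Function

section ErdosSzekeres

variable {α : Type*} [LinearOrder α] {N : ℕ}

theorem exists_label_of_not_exists_strictMono_subseq (f : Fin N → α) (r : ℕ)
    (h : ¬∃ g : Fin (r + 1) → Fin N, StrictMono g ∧ StrictMono (f ∘ g)) :
    ∃ a : Fin N → Fin r, ∀ i j, i < j → f i < f j → a j < a i := by
  -- `a i + 1` will be the length of a longest increasing subsequence starting at `i`.
  let P (i : Fin N) (t : ℕ) : Prop :=
    ∃ g : Fin (t + 1) → Fin N, g 0 = i ∧ StrictMono g ∧ StrictMono (f ∘ g)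
  have hP_lt {i t} : P i t → t < r := by
    rintro ⟨g, -, hg, hfg⟩
    by_contra! hrt
    exact h ⟨g ∘ Fin.castLE (by omega), hg.comp (Fin.strictMono_castLE _),
      hfg.comp (Fin.strictMono_castLE _)⟩
  have hP_zero (i) : P i 0 := ⟨![i], rfl, Subsingleton.strictMono (α := Fin 1) _,
    Subsingleton.strictMono (α := Fin 1) _⟩
  have hP_cons {i j t} (hij : i < j) (hf : f i < f j) : P j t → P i (t + 1) := by
    rintro ⟨g, rfl, hg, hfg⟩
    refine ⟨Matrix.vecCons i g, rfl, hg.vecCons hij, ?_⟩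
    rw [Matrix.vecCons, Fin.comp_cons]
    exact hfg.vecCons hf
  have hP_label (i) : P i (Nat.findGreatest (P i) r) :=
    Nat.findGreatest_spec (Nat.zero_le _) (hP_zero i)
  refine ⟨fun i => ⟨Nat.findGreatest (P i) r, hP_lt (hP_label i)⟩, fun i j hij hf => ?_⟩
  have hPi := hP_cons hij hf (hP_label j)
  exact Nat.lt_of_succ_le (Nat.le_findGreatest (hP_lt hPi).le hPi)

theorem exists_strictMono_or_strictAnti_subseq {f : Fin N → α} (hf : Injective f) {r s : ℕ}
    (hN : r * s < N) :
    (∃ g : Fin (r + 1) → Fin N, StrictMono g ∧ StrictMono (f ∘ g)) ∨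
      ∃ g : Fin (s + 1) → Fin N, StrictMono g ∧ StrictAnti (f ∘ g) := by
  by_contra! ⟨hinc, hdec⟩
  obtain ⟨a, ha⟩ := exists_label_of_not_exists_strictMono_subseq f r
    fun ⟨g, hg, hfg⟩ => hinc g hg hfg
  obtain ⟨b, hb⟩ := exists_label_of_not_exists_strictMono_subseq (OrderDual.toDual ∘ f) s
    fun ⟨g, hg, hfg⟩ => hdec g hg (strictMono_toDual_comp_iff.1 hfg)
  have hab : Injective fun i => (a i, b i) := by
    refine Injective.of_lt_imp_ne fun i j hij hab => ?_
    rcases lt_or_gt_of_ne (hf.ne hij.ne) with hfij | hfij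
    · exact (ha i j hij hfij).ne (congrArg Prod.fst hab).symm
    · exact (hb i j hij hfij).ne (congrArg Prod.snd hab).symm
  exact hN.not_ge (by simpa using Fintype.card_le_of_injective _ hab)

end ErdosSzekeres

namespace Forest

variable {n : ℕ} {F : Forest n} {a b v w : Fin n}

instance (n : ℕ) : Finite (Forest n) := Subtype.finite

theorem Ancestor.trans (hab : F.Ancestor a b) (hbv : F.Ancestor b v) : F.Ancestor a v :=
  Relation.TransGen.trans hbv hab

theorem Ancestor.irrefl (a : Fin n) : ¬F.Ancestor a a := by
  obtain ⟨d, hd⟩ := F.2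
  suffices ∀ {a b}, F.Ancestor a b → d a < d b from fun h => (this h).false
  intro a b h
  induction h with
  | single h => exact hd _ _ h
  | tail _ h ih => exact (hd _ _ h).trans ih

theorem Ancestor.of_parent (h : F.val v = some w) : F.Ancestor w v :=
  Relation.TransGen.single h

theorem Ancestor.exists_parent (h : F.Ancestor a v) : ∃ w, F.val v = some w := by
  obtain ⟨w, hw, -⟩ := Relation.TransGen.head'_iff.mp h
  exact ⟨w, hw⟩

theorem ancestor_iff_of_parent (h : F.val v = some w) :
    F.Ancestor a v ↔ a = w ∨ F.Ancestor a w := by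
  refine ⟨fun ha => ?_, ?_⟩
  · obtain ⟨b, hb, hba⟩ := Relation.TransGen.head'_iff.mp ha
    obtain rfl : b = w := Option.some_injective _ (hb.symm.trans h)
    exact Relation.reflTransGen_iff_eq_or_transGen.mp hba
  · rintro (rfl | ha)
    · exact .of_parent h
    · exact ha.trans (.of_parent h)

open Classical in
noncomputable def level (F : Forest n) (v : Fin n) : ℕ := #{a | F.Ancestor a v}

theorem level_of_parent (h : F.val v = some w) : F.level v = F.level w + 1 := by
  classical
  have : filter (F.Ancestor · v) univ = insert w (filter (F.Ancestor · w) univ) := by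
    ext a
    simp [ancestor_iff_of_parent h]
  rw [level, this, card_insert_of_notMem (by simpa using Ancestor.irrefl w), level]

def IsAncestorChain {N : ℕ} (F : Forest n) (c : Fin N → Fin n) : Prop :=
  ∀ i j, i < j → F.Ancestor (c i) (c j)

theorem IsAncestorChain.injective {N : ℕ} {c : Fin N → Fin n} (hc : F.IsAncestorChain c) :
    Injective c :=
  Injective.of_lt_imp_ne fun i j hij h => Ancestor.irrefl _ (h ▸ hc i j hij)

theorem IsAncestorChain.comp {N M : ℕ} {c : Fin N → Fin n} (hc : F.IsAncestorChain c)
    {g : Fin M → Fin N} (hg : StrictMono g) : F.IsAncestorChain (c ∘ g) :=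
  fun _ _ hij => hc _ _ (hg hij)

theorem IsAncestorChain.snoc {N : ℕ} {c : Fin N → Fin n} (hc : F.IsAncestorChain c)
    (hv : ∀ i, F.Ancestor (c i) v) : F.IsAncestorChain (Fin.snoc c v : Fin (N + 1) → Fin n) := by
  intro i j hij
  induction j using Fin.lastCases with
  | last =>
    obtain ⟨i, rfl⟩ := Fin.exists_castSucc_eq.mpr hij.ne
    simpa using hv i
  | cast j =>
    obtain ⟨i, rfl⟩ := Fin.exists_castSucc_eq.mpr (hij.trans (Fin.castSucc_lt_last j)).ne
    simpa using hc i j (Fin.castSucc_lt_castSucc_iff.mp hij)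

theorem IsAncestorChain.contains {N : ℕ} {c : Fin N → Fin n} (hc : F.IsAncestorChain c)
    {π : Pattern} {g : Fin π.1 → Fin N} (hg : StrictMono g)
    (horder : ∀ i j, π.2 i < π.2 j ↔ c (g i) < c (g j)) : F.Contains π :=
  ⟨c ∘ g, hc.comp hg, horder⟩

theorem exists_isAncestorChain_level (v : Fin n) :
    ∃ c : Fin (F.level v + 1) → Fin n, F.IsAncestorChain c ∧ c (Fin.last _) = v := by
  induction hL : F.level v generalizing v with
  | zero =>
    exact ⟨fun _ => v, fun i j hij => (hij.ne (Subsingleton.elim (α := Fin 1) i j)).elim, rfl⟩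
  | succ L ih =>
    classical
    obtain ⟨a, ha⟩ : (filter (F.Ancestor · v) univ).Nonempty :=
      card_pos.mp (show 0 < F.level v by omega)
    obtain ⟨w, hw⟩ := (mem_filter.mp ha).2.exists_parent
    obtain ⟨c, hc, rfl⟩ := ih w (by rw [level_of_parent hw] at hL; omega)
    refine ⟨Fin.snoc c v, hc.snoc fun i => ?_, by simp⟩
    rcases (Fin.le_last i).lt_or_eq with hi | rfl
    · exact (hc i _ hi).trans (.of_parent hw)
    · exact .of_parent hw

theorem level_lt_of_avoidsSet {S : Set Pattern} {k l : ℕ}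
    (hk : (⟨k, Equiv.refl (Fin k)⟩ : Pattern) ∈ S) (hl : (⟨l, Fin.revPerm⟩ : Pattern) ∈ S)
    (hF : F.AvoidsSet S) (v : Fin n) : F.level v < (k - 1) * (l - 1) + 1 := by
  by_contra! hv
  obtain ⟨c, hc, -⟩ := F.exists_isAncestorChain_level v
  have hcast (p : ℕ) : StrictMono (Fin.castLE (show p ≤ p - 1 + 1 by omega)) :=
    Fin.strictMono_castLE _
  rcases exists_strictMono_or_strictAnti_subseq hc.injective (r := k - 1) (s := l - 1) (by omega)
    with ⟨g, hg, hcg⟩ | ⟨g, hg, hcg⟩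
  · refine hF _ hk (hc.contains (hg.comp (hcast k)) fun i j => ?_)
    simpa using ((hcg.comp (hcast k)).lt_iff_lt (a := i) (b := j)).symm
  · refine hF _ hl (hc.contains (hg.comp (hcast l)) fun i j => ?_)
    simpa using ((hcg.comp_strictMono (hcast l)).lt_iff_gt (a := i) (b := j)).symm

end Forest

section LevelCount

open Real
open scoped Nat

variable {ε : ℝ} {m j : ℕ}

noncomputable def expTower (ε : ℝ) (m j : ℕ) : ℝ := (fun x => exp x / ε)^[m - j] 0

theorem expTower_of_le (h : m ≤ j) : expTower ε m j = 0 := by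
  simp [expTower, Nat.sub_eq_zero_of_le h]

theorem expTower_of_lt (h : j < m) : expTower ε m j = exp (expTower ε m (j + 1)) / ε := by
  rw [expTower, show m - j = m - (j + 1) + 1 by omega, Function.iterate_succ_apply']
  rfl

theorem expTower_pos (hε : 0 < ε) (h : j < m) : 0 < expTower ε m j := by
  rw [expTower_of_lt h]
  positivity

theorem expTower_nonneg (hε : 0 < ε) (m j : ℕ) : 0 ≤ expTower ε m j := by
  rcases lt_or_ge j m with h | h
  · exact (expTower_pos hε h).le
  · exact (expTower_of_le h).ge

theorem pow_le_factorial_mul_exp {x : ℝ} (hx : 0 ≤ x) (n : ℕ) : x ^ n ≤ n ! * exp x := by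
  have := pow_div_factorial_le_exp x hx n
  rwa [div_le_iff₀ (by positivity), mul_comm] at this

theorem sum_mul_card_fiber_le {V : Type*} [Fintype V] (g : V → ℕ) (s : Finset ℕ) {W : ℕ → ℝ}
    (hW : ∀ j, 0 ≤ W j) : ∑ j ∈ s, W j * #{v | g v = j} ≤ ∑ v, W (g v) := by
  classical
  calc ∑ j ∈ s, W j * #{v | g v = j}
      = ∑ j ∈ s, ∑ v with g v = j, W j := by simp only [sum_const, nsmul_eq_mul, mul_comm]
    _ = ∑ v with g v ∈ s, W (g v) := sum_fiberwise_eq_sum_filter' _ _ _ _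
    _ ≤ ∑ v, W (g v) := sum_le_sum_of_subset_of_nonneg (filter_subset _ _) fun v _ _ => hW _

theorem prod_card_parent_level_le {V : Type*} [Fintype V] (lev : V → ℕ)
    (hlev : ∀ v, lev v < m) (hε : 0 < ε) :
    ∏ v, ((#{w | lev w + 1 = lev v} : ℝ) + 1) ≤
      (Fintype.card V)! * exp (∑ j ∈ range m, expTower ε m j) * ε ^ Fintype.card V := by
  set W := expTower ε m
  set T := univ.image lev
  set ν : ℕ → ℕ := fun j => #{v | lev v = j}
  set x : ℕ → ℝ := fun j => W j * ((#{w | lev w + 1 = j} : ℝ) + 1)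
  have hW (v : V) : 0 < W (lev v) := expTower_pos hε (hlev v)
  have hx (j : ℕ) : 0 ≤ x j := mul_nonneg (expTower_nonneg hε m j) (by positivity)
  have hstep (v : V) : exp (W (lev v + 1)) = ε * W (lev v) := by
    rw [show W (lev v) = _ from expTower_of_lt (hlev v), mul_div_cancel₀ _ hε.ne']
  have hfact : (∏ j ∈ T, ((ν j)! : ℝ)) ≤ (Fintype.card V)! := by
    have h := Nat.prod_factorial_dvd_factorial_sum T ν
    rw [← card_eq_sum_card_image, card_univ] at h
    exact_mod_cast Nat.le_of_dvd (Nat.factorial_pos _) h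
  have hsum : ∑ j ∈ T, x j ≤ ∑ j ∈ range m, W j + ∑ v, W (lev v + 1) := by
    simp only [x, mul_add_one, sum_add_distrib, add_comm (∑ j ∈ T, W j * _)]
    refine add_le_add (sum_le_sum_of_subset_of_nonneg ?_ fun j _ _ => expTower_nonneg hε m j)
      (sum_mul_card_fiber_le (lev · + 1) T (expTower_nonneg hε m))
    exact image_subset_iff.mpr fun v _ => mem_range.mpr (hlev v)
  -- Multiplied by `∏ v, W (lev v)`, level `j` contributes `x j ^ ν j ≤ (ν j)! * exp (x j)`, and
  -- the resulting `exp (∑ v, W (lev v + 1))` telescopes through `exp (W (j + 1)) = ε * W j`.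
  refine le_of_mul_le_mul_left ?_ (prod_pos (s := univ) fun v _ => hW v)
  calc (∏ v, W (lev v)) * ∏ v, ((#{w | lev w + 1 = lev v} : ℝ) + 1)
      = ∏ j ∈ T, x j ^ ν j := by rw [← prod_mul_distrib, ← prod_comp x lev]
    _ ≤ ∏ j ∈ T, ((ν j)! * exp (x j)) :=
        prod_le_prod (fun j _ => pow_nonneg (hx j) _) fun j _ =>
          pow_le_factorial_mul_exp (hx j) _
    _ = (∏ j ∈ T, ((ν j)! : ℝ)) * exp (∑ j ∈ T, x j) := by rw [prod_mul_distrib, exp_sum]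
    _ ≤ (Fintype.card V)! * exp (∑ j ∈ range m, W j + ∑ v, W (lev v + 1)) := by
        gcongr
    _ = (∏ v, W (lev v)) * ((Fintype.card V)! * exp (∑ j ∈ range m, W j) *
          ε ^ Fintype.card V) := by
        simp only [exp_add, exp_sum, hstep, prod_mul_distrib, prod_const, card_univ]
        ring

end LevelCount

namespace Forest

open scoped Nat

theorem card_level_lt_le (n m : ℕ) :
    Nat.card {F : Forest n // ∀ v, F.level v < m} ≤
      ∑ lev : Fin n → Fin m, ∏ v, (#{w | (lev w : ℕ) + 1 = lev v} + 1) := by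
  let e (F : {F : Forest n // ∀ v, F.level v < m}) :
      Σ lev : Fin n → Fin m, ∀ v, Option {w // (lev w : ℕ) + 1 = lev v} :=
    ⟨fun v => ⟨F.1.level v, F.2 v⟩, fun v =>
      (F.1.val v).pmap (fun w hw => ⟨w, (level_of_parent hw).symm⟩) fun _ h => h⟩
  have he : Injective e := by
    have hval (F) : (fun v => ((e F).2 v).map Subtype.val) = F.1.val :=
      funext fun v => by simp [e, Option.map_pmap]
    intro F G hFG
    exact Subtype.ext (Subtype.ext (by rw [← hval F, ← hval G, hFG]))
  refine (Nat.card_le_card_of_injective e he).trans_eq ?_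
  simp [Nat.card_eq_fintype_card, Fintype.card_sigma, Fintype.card_pi, Fintype.card_subtype]

theorem exists_card_level_lt_le_mul_pow_mul_factorial (m : ℕ) {ε : ℝ} (hε : 0 < ε) :
    ∃ C, ∀ n, (Nat.card {F : Forest n // ∀ v, F.level v < m} : ℝ) ≤ C * ε ^ n * n ! := by
  set δ := ε / (m + 1)
  have hδ : 0 < δ := by positivity
  refine ⟨Real.exp (∑ j ∈ range m, expTower δ m j), fun n => ?_⟩
  calc (Nat.card {F : Forest n // ∀ v, F.level v < m} : ℝ)
      ≤ ∑ lev : Fin n → Fin m, ∏ v, ((#{w | (lev w : ℕ) + 1 = lev v} : ℝ) + 1) := by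
        exact_mod_cast card_level_lt_le n m
    _ ≤ ∑ _lev : Fin n → Fin m, n ! * Real.exp (∑ j ∈ range m, expTower δ m j) * δ ^ n :=
        sum_le_sum fun lev _ => by
          simpa using prod_card_parent_level_le (fun v => (lev v : ℕ)) (fun v => (lev v).2) hδ
    _ = Real.exp (∑ j ∈ range m, expTower δ m j) * (m * δ) ^ n * n ! := by
        simp only [sum_const, card_univ, Fintype.card_fun, Fintype.card_fin, nsmul_eq_mul]
        push_cast
        ring
    _ ≤ Real.exp (∑ j ∈ range m, expTower δ m j) * ε ^ n * n ! := by
        gcongr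
        rw [mul_div_assoc', div_le_iff₀ (by positivity)]
        nlinarith

end Forest

theorem forestCount_le_card_level_lt {S : Set Pattern} {k l : ℕ}
    (hk : (⟨k, Equiv.refl (Fin k)⟩ : Pattern) ∈ S) (hl : (⟨l, Fin.revPerm⟩ : Pattern) ∈ S)
    (n : ℕ) :
    forestCount S n ≤ Nat.card {F : Forest n // ∀ v, F.level v < (k - 1) * (l - 1) + 1} :=
  Nat.card_le_card_of_injective _
    (Subtype.impEmbedding _ _ fun (F : Forest n) hF => F.level_lt_of_avoidsSet hk hl hF).injective

open scoped Nat Topology in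
theorem tendsto_rpow_inv_div_of_le_mul_pow_mul_factorial {a : ℕ → ℝ} (ha : ∀ n, 0 ≤ a n)
    (h : ∀ ε > 0, ∃ C, ∀ n, a n ≤ C * ε ^ n * n !) :
    Tendsto (fun n : ℕ => a n ^ (n : ℝ)⁻¹ / n) atTop (𝓝 0) := by
  refine tendsto_order.2 ⟨fun b hb => .of_forall fun n =>
    hb.trans_le (div_nonneg (Real.rpow_nonneg (ha n) _) n.cast_nonneg),
    fun δ hδ => ?_⟩
  obtain ⟨C, hC⟩ := h (δ / 2) (by positivity)
  set C' := max C 1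
  have hC' : 0 < C' := lt_max_of_lt_right one_pos
  have hroot : Tendsto (fun n : ℕ => C' ^ (n : ℝ)⁻¹) atTop (𝓝 1) := by
    simpa using tendsto_const_nhds.rpow
      (tendsto_inv_atTop_zero.comp tendsto_natCast_atTop_atTop) (Or.inl hC'.ne')
  filter_upwards [hroot.eventually (gt_mem_nhds one_lt_two), eventually_ne_atTop 0] with n hn2 hn
  have hbound : a n ≤ C' * (δ / 2 * n) ^ n := by
    calc a n ≤ C * (δ / 2) ^ n * n ! := hC n
      _ ≤ C' * (δ / 2) ^ n * n ^ n := by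
        gcongr
        · exact le_max_left C 1
        · exact_mod_cast Nat.factorial_le_pow n
      _ = C' * (δ / 2 * n) ^ n := by ring
  calc a n ^ (n : ℝ)⁻¹ / n ≤ (C' * (δ / 2 * n) ^ n) ^ (n : ℝ)⁻¹ / n := by
        gcongr
        exact ha n
    _ = C' ^ (n : ℝ)⁻¹ * (δ / 2) := by
        rw [Real.mul_rpow hC'.le (by positivity), Real.pow_rpow_inv_natCast (by positivity) hn]
        field_simp
    _ < 2 * (δ / 2) := by gcongr
    _ = δ := by ring

/-- If `S` contains an increasing pattern and a decreasing pattern, then the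
forest Stanley–Wilf limit of `S` is `0`. -/
theorem forest_stanley_wilf_limit_zero (S : Set Pattern) (k l : ℕ)
    (hk : (⟨k, Equiv.refl (Fin k)⟩ : Pattern) ∈ S)
    (hl : (⟨l, Fin.revPerm⟩ : Pattern) ∈ S) :
    Tendsto (fun n : ℕ => (forestCount S n : ℝ) ^ ((n : ℝ)⁻¹) / n)
      atTop (nhds 0) := by
  refine tendsto_rpow_inv_div_of_le_mul_pow_mul_factorial (fun n => by positivity) fun ε hε => ?_
  obtain ⟨C, hC⟩ := Forest.exists_card_level_lt_le_mul_pow_mul_factorial ((k - 1) * (l - 1) + 1) hε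
  exact ⟨C, fun n => le_trans (mod_cast forestCount_le_card_level_lt hk hl n) (hC n)⟩
end

section
/- Let f_n be the number of rooted labeled forests on [n] avoiding the set S = {123, 21}; then f_n equals the n-th Bell number B_n. -/
open Filter

/-! ### Auxiliary development -/


def Good {n : ℕ} (p : Fin n → Option (Fin n)) : Prop :=
  ∀ v w : Fin n, p v = some w → w < v ∧ p w = none

lemma good_isForest {n : ℕ} {p : Fin n → Option (Fin n)} (h : Good p) : IsForest n p := by
  refine ⟨fun v => if p v = none then 0 else 1, fun v w hvw => ?_⟩
  have h2 := (h v w hvw).2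
  simp [hvw, h2]

lemma good_anc {n : ℕ} {p : Fin n → Option (Fin n)} (hg : Good p) {a b : Fin n}
    (h : Relation.TransGen (fun x y : Fin n => p x = some y) b a) : p b = some a := by
  induction h with
  | single h => exact h
  | tail h₁ h₂ ih =>
      exact absurd h₂ (by rw [(hg _ _ ih).2]; simp)

/-- root of a vertex -/
def rt {n : ℕ} (p : Fin n → Option (Fin n)) (v : Fin n) : Fin n := (p v).getD v

lemma rt_le {n : ℕ} {p : Fin n → Option (Fin n)} (hg : Good p) (v : Fin n) :
    rt p v ≤ v := by
  rcases h : p v with _ | w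
  · simp [rt, h]
  · simp [rt, h]; exact le_of_lt (hg v w h).1

lemma rt_rt {n : ℕ} {p : Fin n → Option (Fin n)} (hg : Good p) (v : Fin n) :
    rt p (rt p v) = rt p v := by
  rcases h : p v with _ | w
  · simp [rt, h]
  · simp [rt, h, (hg v w h).2]

lemma good_avoids {n : ℕ} (F : Forest n) (hg : Good F.val) :
    F.AvoidsSet {⟨3, Equiv.refl (Fin 3)⟩, ⟨2, Fin.revPerm⟩} := by
  intro π hπ hc
  rcases hπ with h | h
  · subst h
    obtain ⟨v, ha, _⟩ := hc
    have h01 : F.val (v 1) = some (v 0) := good_anc hg (ha 0 1 (by decide))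
    have h12 : F.val (v 2) = some (v 1) := good_anc hg (ha 1 2 (by decide))
    have := (hg _ _ h12).2
    rw [this] at h01; simp at h01
  · rw [Set.mem_singleton_iff] at h
    subst h
    obtain ⟨v, ha, ho⟩ := hc
    have h01 : F.val (v 1) = some (v 0) := good_anc hg (ha 0 1 (by decide))
    have hlt : v 0 < v 1 := (hg _ _ h01).1
    have := (ho 1 0).mp (by decide)
    exact absurd hlt (not_lt.mpr (le_of_lt this))

lemma avoids_good {n : ℕ} (F : Forest n)
    (ha : F.AvoidsSet {⟨3, Equiv.refl (Fin 3)⟩, ⟨2, Fin.revPerm⟩}) : Good F.val := by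
  obtain ⟨d, hd⟩ := F.2
  -- step 1: parent < child
  have step : ∀ v w : Fin n, F.val v = some w → w < v := by
    intro v w h
    have hne : w ≠ v := by
      intro he
      exact absurd (hd v w h) (by rw [he]; exact lt_irrefl _)
    rcases lt_or_gt_of_ne hne with h' | h'
    · exact h'
    · exfalso
      apply ha ⟨2, Fin.revPerm⟩ (Or.inr rfl)
      refine ⟨![w, v], ?_, ?_⟩
      · intro i j hij
        fin_cases i <;> fin_cases j <;>
          simp only [Fin.isValue, Matrix.cons_val_zero, Matrix.cons_val_one, Matrix.head_cons]
        · exact absurd hij (by decide)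
        · exact Relation.TransGen.single h
        · exact absurd hij (by decide)
        · exact absurd hij (by decide)
      · intro i j
        fin_cases i <;> fin_cases j <;>
          simp only [Fin.isValue, Matrix.cons_val_zero, Matrix.cons_val_one, Matrix.head_cons]
        · exact iff_of_false (by decide) (lt_irrefl _)
        · exact iff_of_false (by decide) (not_lt.mpr h'.le)
        · exact iff_of_true (by decide) h'
        · exact iff_of_false (by decide) (lt_irrefl _)
  intro v w h
  refine ⟨step v w h, ?_⟩
  by_contra hw
  rcases hu : F.val w with _ | u
  · exact hw hu
  have huw : u < w := step w u hu
  have hwv : w < v := step v w h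
  have huv : u < v := huw.trans hwv
  exfalso
  apply ha ⟨3, Equiv.refl (Fin 3)⟩ (Or.inl rfl)
  have a1 : F.Ancestor u w := Relation.TransGen.single hu
  have a2 : F.Ancestor w v := Relation.TransGen.single h
  have a3 : F.Ancestor u v := Relation.TransGen.head h (Relation.TransGen.single hu)
  refine ⟨![u, w, v], ?_, ?_⟩
  · intro i j hij
    fin_cases i <;> fin_cases j <;>
      simp only [Fin.isValue, Matrix.cons_val_zero, Matrix.cons_val_one, Matrix.head_cons,
        Matrix.cons_val_two, Matrix.tail_cons]
    · exact absurd hij (by decide)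
    · exact a1
    · exact a3
    · exact absurd hij (by decide)
    · exact absurd hij (by decide)
    · exact a2
    · exact absurd hij (by decide)
    · exact absurd hij (by decide)
    · exact absurd hij (by decide)
  · intro i j
    fin_cases i <;> fin_cases j <;>
      simp only [Fin.isValue, Matrix.cons_val_zero, Matrix.cons_val_one, Matrix.head_cons,
        Matrix.cons_val_two, Matrix.tail_cons]
    · exact iff_of_false (by decide) (lt_irrefl _)
    · exact iff_of_true (by decide) huw
    · exact iff_of_true (by decide) huv
    · exact iff_of_false (by decide) (not_lt.mpr huw.le)
    · exact iff_of_false (by decide) (lt_irrefl _)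
    · exact iff_of_true (by decide) hwv
    · exact iff_of_false (by decide) (not_lt.mpr huv.le)
    · exact iff_of_false (by decide) (not_lt.mpr hwv.le)
    · exact iff_of_false (by decide) (lt_irrefl _)

/-- the equivalence class of `v` as a finset -/
noncomputable def clSet {n : ℕ} (s : Setoid (Fin n)) (v : Fin n) : Finset (Fin n) :=
  @Finset.filter (Fin n) (fun w => s w v) (Classical.decPred _) Finset.univ

lemma mem_clSet {n : ℕ} (s : Setoid (Fin n)) {v w : Fin n} : w ∈ clSet s v ↔ s w v := by
  classical
  simp [clSet]

lemma clSet_nonempty {n : ℕ} (s : Setoid (Fin n)) (v : Fin n) : (clSet s v).Nonempty :=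
  ⟨v, (mem_clSet s).mpr (s.refl v)⟩

/-- minimum of the class of `v` under setoid `s` -/
noncomputable def clMin {n : ℕ} (s : Setoid (Fin n)) (v : Fin n) : Fin n :=
  (clSet s v).min' (clSet_nonempty s v)

lemma clMin_rel {n : ℕ} (s : Setoid (Fin n)) (v : Fin n) : s (clMin s v) v :=
  (mem_clSet s).mp (Finset.min'_mem _ _)

lemma clMin_le {n : ℕ} (s : Setoid (Fin n)) {v w : Fin n} (h : s w v) :
    clMin s v ≤ w :=
  Finset.min'_le _ w ((mem_clSet s).mpr h)

lemma clMin_congr {n : ℕ} (s : Setoid (Fin n)) {a b : Fin n} (h : s a b) :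
    clMin s a = clMin s b := by
  apply le_antisymm
  · exact clMin_le s (s.trans (clMin_rel s b) (s.symm h))
  · exact clMin_le s (s.trans (clMin_rel s a) h)

noncomputable def setoidToGood {n : ℕ} (s : Setoid (Fin n)) :
    {p : Fin n → Option (Fin n) // Good p} := by
  refine ⟨fun v => if clMin s v = v then none else some (clMin s v), ?_⟩
  intro v w h
  by_cases hc : clMin s v = v
  · simp [hc] at h
  · simp only [if_neg hc, Option.some.injEq] at h
    subst h
    refine ⟨lt_of_le_of_ne (clMin_le s (s.refl v)) hc, ?_⟩
    have : clMin s (clMin s v) = clMin s v := clMin_congr s (clMin_rel s v)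
    simp [this]

noncomputable def goodEquivSetoid (n : ℕ) :
    {p : Fin n → Option (Fin n) // Good p} ≃ Setoid (Fin n) where
  toFun p := Setoid.ker (rt p.1)
  invFun := setoidToGood
  left_inv := by
    rintro ⟨p, hg⟩
    apply Subtype.ext
    funext v
    set s := Setoid.ker (rt p) with hs
    have hmin : ∀ u : Fin n, clMin s u = rt p u := by
      intro u
      apply le_antisymm
      · exact clMin_le s (rt_rt hg u)
      · have h1 : s (clMin s u) u := clMin_rel s u
        have h2 : rt p (clMin s u) = rt p u := h1
        calc rt p u = rt p (clMin s u) := h2.symm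
          _ ≤ clMin s u := rt_le hg _
    show (if clMin s v = v then none else some (clMin s v)) = p v
    rw [hmin v]
    rcases h : p v with _ | w
    · simp [rt, h]
    · have hlt : w < v := (hg v w h).1
      have hrw : rt p v = w := by simp [rt, h]
      rw [hrw]
      simp [Fin.ne_of_lt hlt]
  right_inv := by
    intro s
    apply Setoid.ext
    intro a b
    have hrt : ∀ u : Fin n, rt (setoidToGood s).1 u = clMin s u := by
      intro u
      show ((if clMin s u = u then none else some (clMin s u)).getD u) = clMin s u
      by_cases hc : clMin s u = u <;> simp [hc]
    show rt (setoidToGood s).1 a = rt (setoidToGood s).1 b ↔ s a b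
    rw [hrt a, hrt b]
    constructor
    · intro h
      exact s.trans (s.symm (clMin_rel s a)) (h ▸ clMin_rel s b)
    · exact clMin_congr s

noncomputable def avoidEquiv (n : ℕ) :
    {F : Forest n // F.AvoidsSet {⟨3, Equiv.refl (Fin 3)⟩, ⟨2, Fin.revPerm⟩}} ≃
      {p : Fin n → Option (Fin n) // Good p} where
  toFun F := ⟨F.1.1, avoids_good F.1 F.2⟩
  invFun p := ⟨⟨p.1, good_isForest p.2⟩, good_avoids _ p.2⟩
  left_inv _ := Subtype.ext (Subtype.ext rfl)
  right_inv _ := rfl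


/-- The number of rooted labeled forests on `[n]` avoiding `{123, 21}` equals
the `n`-th Bell number, i.e. the number of partitions (equivalence relations)
of an `n`-element set. -/
theorem forestCount_123_21_eq_bell (n : ℕ) :
    forestCount {⟨3, Equiv.refl (Fin 3)⟩, ⟨2, Fin.revPerm⟩} n =
      Nat.card (Setoid (Fin n)) := by
  unfold forestCount
  exact Nat.card_congr ((avoidEquiv n).trans (goodEquivSetoid n))
end
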